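/- In the m-player game, for every 1 ≤ i ≤ m and every s ∈ [−1,1], Q_τ(s) · P(A_i) · s^{l_i} = Σ_{j=1}^{m} g_τ^{A_j}(s) · w_{A_i}^{A_j}(s), where Q_τ(s) = Σ_{n≥0} μ(τ > n) s^n and g_τ^{A_j}(s) = Σ_{n≥0} p_n^{A_j} s^n. -/

import Mathlib

/-!
Fix `n` and `i`. The event `τ > n` depends only on the first `n` tosses, so it is independent of
the tosses `n + 1, …, n + l_i` spelling `A_i`: `μ(τ > n) P(A_i) = μ(τ > n, A_i spelled after n)`.
On the latter event the game ends at some toss `n + k` with `1 ≤ k ≤ l_i`, won by a unique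
pattern `A_j` (no pattern is a substring of another). Then `A_j` cannot be shorter than `k`
(it would be a substring of `A_i`), its last `k` letters are the first `k` letters of `A_i`,
and the remaining `l_i - k` letters of `A_i` are again independent of the game. Hence
`μ(τ > n) P(A_i) = Σ_j Σ_k [A_{i(k)} = A_j^{(k)}] P(A_i^{(l_i - k)}) p_{n+k}^{A_j}`; multiplying by
`s^(n + l_i)` and summing over `n` gives the identity.
-/

open MeasureTheory ENNReal

noncomputable section

/-- Probability of a single toss outcome: `true` (heads) has probability `p`,
`false` (tails) has probability `1 - p`. -/
def letterP (p : ℝ) (b : Bool) : ℝ := if b then p else 1 - p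

/-- Probability of a finite string of tosses (`1` for the empty string). -/
def strP (p : ℝ) (A : List Bool) : ℝ := (A.map (letterP p)).prod

/-- `μ` is the product measure on `{H,T}^ℕ` of i.i.d. coin tosses with heads
probability `p`: every cylinder set has the product probability. -/
def IsCoinMeasure (p : ℝ) (μ : Measure (ℕ → Bool)) : Prop :=
  ∀ (n : ℕ) (a : Fin n → Bool),
    μ {ξ | ∀ i : Fin n, ξ i = a i} = ENNReal.ofReal (∏ i, letterP p (a i))

/-- The pattern `A` (of length `l`) occurs ending exactly at toss `n`
(toss number `k ≥ 1` of `ξ` is `ξ (k - 1)`): `n ≥ l` and tosses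
`n - l + 1, …, n` spell `A`. -/
def occursAt (A : List Bool) (ξ : ℕ → Bool) (n : ℕ) : Prop :=
  A.length ≤ n ∧ (List.ofFn fun k : Fin A.length => ξ (n - A.length + k)) = A

/-- The first toss at which the pattern `A` has occurred (`⊤` if it never occurs). -/
def hitTime (A : List Bool) (ξ : ℕ → Bool) : ℕ∞ :=
  ⨅ (n : ℕ) (_ : occursAt A ξ n), (n : ℕ∞)

/-- The number of tosses until the `m`-player game ends: the minimum of the
hitting times of the patterns `A i`. -/
def gameTime {m : ℕ} (A : Fin m → List Bool) (ξ : ℕ → Bool) : ℕ∞ :=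
  ⨅ i, hitTime (A i) ξ

/-- The correlation polynomial
`w_A^B(s) = Σ_{k=1}^{min(|A|,|B|)} [A_(k) = B^(k)] P(A^(|A|-k)) s^(|A|-k)`,
where `A_(k)` is the prefix of length `k` of `A` and `B^(k)` is the suffix of
length `k` of `B`. -/
def corrW (p : ℝ) (A B : List Bool) (s : ℝ) : ℝ :=
  ∑ k ∈ Finset.Icc 1 (min A.length B.length),
    (if A.take k = B.drop (B.length - k) then (1 : ℝ) else 0) *
      strP p (A.drop k) * s ^ (A.length - k)

/-- The tosses `a + 1, …, a + l`; toss `k` is `ξ (k - 1)`. -/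
def window (ξ : ℕ → Bool) (a l : ℕ) : List Bool :=
  List.ofFn fun k : Fin l => ξ (a + k)

section Window

variable {ξ η : ℕ → Bool} {A B : List Bool} {a b l l' L t n k : ℕ}

@[simp]
lemma length_window : (window ξ a l).length = l :=
  List.length_ofFn

lemma occursAt_iff_window :
    occursAt A ξ t ↔ A.length ≤ t ∧ window ξ (t - A.length) A.length = A :=
  Iff.rfl

lemma window_add : window ξ a (l + l') = window ξ a l ++ window ξ (a + l) l' := by
  simp [window, List.ofFn_add, add_assoc]

lemma window_split (h : l ≤ L) :
    window ξ a L = window ξ a l ++ window ξ (a + l) (L - l) := by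
  rw [← window_add, Nat.add_sub_cancel' h]

lemma window_congr (h : ∀ k < a + l, ξ k = η k) : window ξ a l = window η a l := by
  simp only [window, List.ofFn_inj]
  exact funext fun k => h _ (by omega)

lemma window_infix (hab : a ≤ b) (hl : b + l' ≤ a + l) :
    window ξ b l' <:+: window ξ a l := by
  rw [window_split (show b - a ≤ l by omega), window_split (show l' ≤ l - (b - a) by omega),
    ← List.append_assoc, show a + (b - a) = b by omega]
  exact List.infix_append _ _ _

lemma occursAt_congr (h : ∀ k < t, ξ k = η k) : occursAt A ξ t ↔ occursAt A η t := by
  simp only [occursAt_iff_window]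
  exact and_congr_right fun hA => by rw [window_congr fun k hk => h k (by omega)]

lemma suffix_of_occursAt {C : List Bool} (hB : occursAt B ξ t) (hC : occursAt C ξ t)
    (h : B.length ≤ C.length) : B <:+ C := by
  obtain ⟨hCt, hCw⟩ := occursAt_iff_window.1 hC
  rw [window_split (show C.length - B.length ≤ C.length by omega),
    show t - C.length + (C.length - B.length) = t - B.length by omega,
    show C.length - (C.length - B.length) = B.length by omega,
    (occursAt_iff_window.1 hB).2] at hCw
  rw [← hCw]
  exact List.suffix_append _ _

/-- The last `k` letters of `B` are the tosses `n + 1, …, n + k`. -/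
lemma window_eq_iff_of_occursAt (hB : occursAt B ξ (n + k)) (hkB : k ≤ B.length)
    (hkA : k ≤ A.length) :
    window ξ n A.length = A ↔
      A.take k = B.drop (B.length - k) ∧ window ξ (n + k) (A.length - k) = A.drop k := by
  have hsuffix : B.drop (B.length - k) = window ξ n k := by
    obtain ⟨hBt, hBw⟩ := occursAt_iff_window.1 hB
    rw [window_split (show B.length - k ≤ B.length by omega),
      show n + k - B.length + (B.length - k) = n by omega,
      show B.length - (B.length - k) = k by omega] at hBw
    rw [← hBw, List.drop_left' (by simp)]
  rw [hsuffix, window_split hkA]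
  constructor
  · intro h
    obtain ⟨h₁, h₂⟩ :=
      List.append_inj (h.trans (List.take_append_drop k A).symm) (by simp; omega)
    exact ⟨h₁.symm, h₂⟩
  · rintro ⟨h₁, h₂⟩
    rw [← h₁, h₂, List.take_append_drop]

lemma infix_of_occursAt (hB : occursAt B ξ (n + k)) (hA : window ξ n A.length = A)
    (hBk : B.length < k) (hkA : k ≤ A.length) : B <:+: A := by
  rw [← hA, ← (occursAt_iff_window.1 hB).2]
  exact window_infix (by omega) (by omega)

end Window

/-- `μ (wonAt A j t)` is `p_t^{A_j}`. -/
def wonAt {m : ℕ} (A : Fin m → List Bool) (j : Fin m) (t : ℕ) : Set (ℕ → Bool) :=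
  {ξ | gameTime A ξ = t ∧ hitTime (A j) ξ = t}

section HittingTimes

variable {m : ℕ} {A : Fin m → List Bool} {B : List Bool} {ξ η : ℕ → Bool} {n t : ℕ}

lemma hitTime_le_of_occursAt (h : occursAt B ξ t) : hitTime B ξ ≤ t :=
  iInf₂_le t h

lemma le_hitTime_iff : (n : ℕ∞) ≤ hitTime B ξ ↔ ∀ k < n, ¬ occursAt B ξ k := by
  simp only [hitTime, le_iInf_iff, Nat.cast_le]
  exact forall_congr' fun k => ⟨fun h hk hB => (h hB).not_gt hk, fun h hB => not_lt.1 (h · hB)⟩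

lemma occursAt_of_hitTime_eq (h : hitTime B ξ = t) : occursAt B ξ t := by
  by_contra hB
  have : ((t + 1 : ℕ) : ℕ∞) ≤ hitTime B ξ := le_hitTime_iff.2 fun k hk =>
    (Nat.lt_succ_iff.1 hk).lt_or_eq.elim (le_hitTime_iff.1 h.ge k) (· ▸ hB)
  rw [h, Nat.cast_le] at this
  omega

lemma hitTime_ne_of_lt_length (h : t < B.length) : hitTime B ξ ≠ t :=
  fun hB => h.not_ge (occursAt_of_hitTime_eq hB).1

lemma le_gameTime_iff : (n : ℕ∞) ≤ gameTime A ξ ↔ ∀ j, ∀ k < n, ¬ occursAt (A j) ξ k := by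
  simp only [gameTime, le_iInf_iff, le_hitTime_iff]

lemma lt_gameTime_iff : (n : ℕ∞) < gameTime A ξ ↔ ∀ j, ∀ k ≤ n, ¬ occursAt (A j) ξ k := by
  rw [← ENat.add_one_le_iff (ENat.natCast_ne_top n), ← Nat.cast_succ, le_gameTime_iff]
  simp only [Nat.lt_succ_iff]

lemma gameTime_eq_and_hitTime_eq_iff {j : Fin m} :
    gameTime A ξ = t ∧ hitTime (A j) ξ = t ↔
      occursAt (A j) ξ t ∧ ∀ j', ∀ k < t, ¬ occursAt (A j') ξ k := by
  constructor
  · rintro ⟨hgame, hhit⟩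
    exact ⟨occursAt_of_hitTime_eq hhit, le_gameTime_iff.1 hgame.ge⟩
  · rintro ⟨hj, hnone⟩
    have hhit : hitTime (A j) ξ = t :=
      le_antisymm (hitTime_le_of_occursAt hj) (le_hitTime_iff.2 (hnone j))
    exact ⟨le_antisymm (hhit ▸ iInf_le _ j) (le_gameTime_iff.2 hnone), hhit⟩

lemma exists_gameTime_eq_hitTime {i : Fin m} (h : occursAt (A i) ξ t) :
    ∃ j, ∃ t' ≤ t, gameTime A ξ = t' ∧ hitTime (A j) ξ = t' := by
  classical
  have hex : ∃ t', ∃ j, occursAt (A j) ξ t' := ⟨t, i, h⟩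
  obtain ⟨j, hj⟩ := Nat.find_spec hex
  refine ⟨j, Nat.find hex, Nat.find_min' hex ⟨i, h⟩, gameTime_eq_and_hitTime_eq_iff.2 ⟨hj, ?_⟩⟩
  exact fun j' k hk hocc => Nat.find_min hex hk ⟨j', hocc⟩

lemma dependsOn_lt_gameTime :
    DependsOn (· ∈ {ξ | (n : ℕ∞) < gameTime A ξ}) (Set.Iio n) := by
  intro ξ η h
  simp only [Set.mem_ofPred_eq, lt_gameTime_iff]
  exact propext <| forall_congr' fun j => forall₂_congr fun k hk =>
    not_congr (occursAt_congr fun l hl => h l (by simp; omega))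

lemma dependsOn_wonAt {j : Fin m} : DependsOn (· ∈ wonAt A j t) (Set.Iio t) := by
  intro ξ η h
  have hloc : ∀ k ≤ t, ∀ B, occursAt B ξ k ↔ occursAt B η k :=
    fun k hk B => occursAt_congr fun l hl => h l (by simp; omega)
  simp only [wonAt, Set.mem_ofPred_eq, gameTime_eq_and_hitTime_eq_iff]
  exact propext <| and_congr (hloc t le_rfl _) <| forall_congr' fun j' =>
    forall₂_congr fun k hk => not_congr (hloc k hk.le _)

end HittingTimes

lemma measure_eq_sum_preimage_singleton_inter {α β : Type*} [MeasurableSpace α]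
    [MeasurableSpace β] [Fintype β] [MeasurableSingletonClass β] (μ : Measure α) {f : α → β}
    (hf : Measurable f) (T : Set α) : μ T = ∑ b, μ (f ⁻¹' {b} ∩ T) := by
  have hfib : ∀ b ∈ Finset.univ, MeasurableSet (f ⁻¹' {b}) :=
    fun b _ => hf (measurableSet_singleton b)
  have := sum_measure_preimage_singleton (μ := μ.restrict T) Finset.univ hfib
  rw [Finset.coe_univ, Set.preimage_univ, Measure.restrict_apply_univ] at this
  rw [← this]
  exact Finset.sum_congr rfl fun b hb => Measure.restrict_apply (hfib b hb)

lemma letterP_nonneg {p : ℝ} (hp0 : 0 ≤ p) (hp1 : p ≤ 1) (b : Bool) : 0 ≤ letterP p b := by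
  cases b <;> simp [letterP] <;> linarith

lemma strP_nonneg {p : ℝ} (hp0 : 0 ≤ p) (hp1 : p ≤ 1) (w : List Bool) : 0 ≤ strP p w :=
  List.prod_nonneg fun _ hx => by
    obtain ⟨b, -, rfl⟩ := List.mem_map.1 hx
    exact letterP_nonneg hp0 hp1 b

lemma strP_append (p : ℝ) (u w : List Bool) : strP p (u ++ w) = strP p u * strP p w := by
  simp [strP]

def spellsAfter (B : List Bool) (n : ℕ) : Set (ℕ → Bool) :=
  {ξ | window ξ n B.length = B}

def firstTosses (n : ℕ) (ξ : ℕ → Bool) : Fin n → Bool := fun k => ξ k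

lemma measurable_firstTosses (n : ℕ) : Measurable (firstTosses n) :=
  measurable_pi_lambda _ fun k => measurable_pi_apply (k : ℕ)

lemma preimage_firstTosses_singleton {n : ℕ} (a : Fin n → Bool) :
    firstTosses n ⁻¹' {a} = spellsAfter (List.ofFn a) 0 := by
  ext ξ
  simp only [spellsAfter, Set.mem_preimage, Set.mem_singleton_iff, Set.mem_ofPred_eq,
    List.length_ofFn, window, zero_add, List.ofFn_inj]
  rfl

lemma preimage_image_firstTosses {n : ℕ} {S : Set (ℕ → Bool)}
    (hS : DependsOn (· ∈ S) (Set.Iio n)) : firstTosses n ⁻¹' (firstTosses n '' S) = S := by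
  refine subset_antisymm ?_ (Set.subset_preimage_image _ _)
  rintro η ⟨ξ, hξ, hξη⟩
  have : (ξ ∈ S) = (η ∈ S) := hS fun k hk => congrFun hξη ⟨k, hk⟩
  exact this ▸ hξ

lemma DependsOn.measurableSet {n : ℕ} {S : Set (ℕ → Bool)}
    (hS : DependsOn (· ∈ S) (Set.Iio n)) : MeasurableSet S := by
  rw [← preimage_image_firstTosses hS]
  exact measurable_firstTosses n (Set.toFinite _).measurableSet

section CoinMeasure

variable {p : ℝ} {μ : Measure (ℕ → Bool)}

lemma IsCoinMeasure.measure_spellsAfter_zero (hμ : IsCoinMeasure p μ) (w : List Bool) :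
    μ (spellsAfter w 0) = ENNReal.ofReal (strP p w) := by
  have hcyl : spellsAfter w 0 = {ξ | ∀ k : Fin w.length, ξ k = w[k]} := by
    conv_lhs => rw [← List.ofFn_getElem (xs := w), ← preimage_firstTosses_singleton]
    ext ξ
    simp [firstTosses, funext_iff]
  rw [hcyl, hμ, strP, ← List.ofFn_getElem_eq_map, List.prod_ofFn]
  rfl

lemma IsCoinMeasure.measure_preimage_firstTosses_inter_spellsAfter (hμ : IsCoinMeasure p μ)
    (hp0 : 0 ≤ p) (hp1 : p ≤ 1) {n : ℕ} (a : Fin n → Bool) (B : List Bool) :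
    μ (firstTosses n ⁻¹' {a} ∩ spellsAfter B n) =
      μ (firstTosses n ⁻¹' {a}) * ENNReal.ofReal (strP p B) := by
  have hinter : firstTosses n ⁻¹' {a} ∩ spellsAfter B n = spellsAfter (List.ofFn a ++ B) 0 := by
    ext ξ
    simp only [preimage_firstTosses_singleton, spellsAfter, Set.mem_inter_iff,
      Set.mem_ofPred_eq, List.length_append, List.length_ofFn, window_add, zero_add]
    exact ⟨fun ⟨h₁, h₂⟩ => by rw [h₁, h₂], fun h => List.append_inj h (by simp)⟩
  rw [hinter, preimage_firstTosses_singleton, hμ.measure_spellsAfter_zero,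
    hμ.measure_spellsAfter_zero, strP_append, ENNReal.ofReal_mul (strP_nonneg hp0 hp1 _)]

lemma IsCoinMeasure.measure_inter_spellsAfter (hμ : IsCoinMeasure p μ) (hp0 : 0 ≤ p) (hp1 : p ≤ 1)
    {n : ℕ} {S : Set (ℕ → Bool)} (hS : DependsOn (· ∈ S) (Set.Iio n)) (B : List Bool) :
    μ (S ∩ spellsAfter B n) = μ S * ENNReal.ofReal (strP p B) := by
  have hfib : ∀ a, firstTosses n ⁻¹' {a} ⊆ S ∨ Disjoint (firstTosses n ⁻¹' {a}) S := by
    intro a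
    by_cases ha : a ∈ firstTosses n '' S
    · refine Or.inl fun ξ (hξ : firstTosses n ξ = a) => ?_
      rw [← preimage_image_firstTosses hS, Set.mem_preimage, hξ]
      exact ha
    · refine Or.inr (Set.disjoint_left.2 fun ξ hξ hξS => ha ⟨ξ, hξS, hξ⟩)
  rw [measure_eq_sum_preimage_singleton_inter μ (measurable_firstTosses n),
    measure_eq_sum_preimage_singleton_inter μ (measurable_firstTosses n) S, Finset.sum_mul]
  refine Finset.sum_congr rfl fun a _ => ?_
  rcases hfib a with hsub | hdisj
  · rw [← Set.inter_assoc, Set.inter_eq_left.2 hsub,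
      hμ.measure_preimage_firstTosses_inter_spellsAfter hp0 hp1]
  · rw [← Set.inter_assoc, hdisj.inter_eq, Set.empty_inter, measure_empty, zero_mul]

end CoinMeasure

def overlapCoeff (p : ℝ) (A B : List Bool) (k : ℕ) : ℝ :=
  if A.take k = B.drop (B.length - k) then strP p (A.drop k) else 0

lemma overlapCoeff_nonneg {p : ℝ} (hp0 : 0 ≤ p) (hp1 : p ≤ 1) (A B : List Bool) (k : ℕ) :
    0 ≤ overlapCoeff p A B k := by
  unfold overlapCoeff
  split_ifs
  exacts [strP_nonneg hp0 hp1 _, le_rfl]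

lemma overlapCoeff_eq_zero_of_length_lt {p : ℝ} {A B : List Bool} {k : ℕ} (hkA : k ≤ A.length)
    (hBk : B.length < k) : overlapCoeff p A B k = 0 := by
  refine if_neg fun h => ?_
  have := congrArg List.length h
  simp at this
  omega

lemma corrW_eq_sum_overlapCoeff (p : ℝ) (A B : List Bool) (s : ℝ) :
    corrW p A B s = ∑ k ∈ Finset.Icc 1 A.length, overlapCoeff p A B k * s ^ (A.length - k) := by
  calc corrW p A B s
      = ∑ k ∈ Finset.Icc 1 (min A.length B.length), overlapCoeff p A B k * s ^ (A.length - k) :=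
        Finset.sum_congr rfl fun k _ => by unfold overlapCoeff; split_ifs <;> ring
    _ = _ := Finset.sum_subset (Finset.Icc_subset_Icc_right (min_le_left _ _)) fun k hk hk' => by
        simp only [Finset.mem_Icc] at hk hk'
        rw [overlapCoeff_eq_zero_of_length_lt hk.2 (by omega), zero_mul]

section Game

variable {m : ℕ} {A : Fin m → List Bool} {n t : ℕ}

lemma dependsOn_spellsAfter (B : List Bool) :
    DependsOn (· ∈ spellsAfter B n) (Set.Iio (n + B.length)) := by
  intro ξ η h
  simp only [spellsAfter, Set.mem_ofPred_eq, window_congr fun k hk => h k hk]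

lemma wonAt_eq_empty_of_lt_length {j : Fin m} (h : t < (A j).length) : wonAt A j t = ∅ :=
  Set.eq_empty_of_forall_notMem fun _ hξ => hitTime_ne_of_lt_length h hξ.2

lemma disjoint_wonAt (hsub : ∀ i j, i ≠ j → ¬ (A i) <:+: (A j)) {j j' : Fin m} {t t' : ℕ}
    (h : (j, t) ≠ (j', t')) : Disjoint (wonAt A j t) (wonAt A j' t') := by
  refine Set.disjoint_left.2 fun ξ hξ hξ' => ?_
  obtain rfl : t = t' := by exact_mod_cast hξ.1.symm.trans hξ'.1
  have hjj' : j ≠ j' := fun hj => h (hj ▸ rfl)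
  have hj := occursAt_of_hitTime_eq hξ.2
  have hj' := occursAt_of_hitTime_eq hξ'.2
  rcases le_total (A j).length (A j').length with hl | hl
  · exact hsub j j' hjj' (suffix_of_occursAt hj hj' hl).isInfix
  · exact hsub j' j hjj'.symm (suffix_of_occursAt hj' hj hl).isInfix

lemma lt_gameTime_inter_spellsAfter (i : Fin m) (n : ℕ) :
    {ξ | (n : ℕ∞) < gameTime A ξ} ∩ spellsAfter (A i) n =
      ⋃ jk ∈ Finset.univ ×ˢ Finset.Icc 1 (A i).length,
        wonAt A jk.1 (n + jk.2) ∩ spellsAfter (A i) n := by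
  ext ξ
  simp only [Set.mem_inter_iff, Set.mem_iUnion, Finset.mem_product, Finset.mem_univ,
    Finset.mem_Icc, true_and, exists_prop, Prod.exists]
  constructor
  · rintro ⟨hgame, hspell⟩
    have hocc : occursAt (A i) ξ (n + (A i).length) := by
      rw [occursAt_iff_window, Nat.add_sub_cancel]
      exact ⟨by omega, hspell⟩
    obtain ⟨j, t, ht, hwon⟩ := exists_gameTime_eq_hitTime hocc
    have hnt : (n : ℕ∞) < t := hwon.1 ▸ hgame
    replace hnt : n < t := by exact_mod_cast hnt
    refine ⟨j, t - n, ⟨by omega, by omega⟩, ?_, hspell⟩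
    rwa [Nat.add_sub_cancel' hnt.le]
  · rintro ⟨j, k, ⟨hk, -⟩, hwon, hspell⟩
    refine ⟨?_, hspell⟩
    rw [Set.mem_ofPred_eq, hwon.1]
    exact_mod_cast Nat.lt_add_of_pos_right hk

variable {p : ℝ} {μ : Measure (ℕ → Bool)}

lemma summable_measure_wonAt [IsFiniteMeasure μ] (hsub : ∀ i j, i ≠ j → ¬ (A i) <:+: (A j))
    (j : Fin m) : Summable fun t => (μ (wonAt A j t)).toReal :=
  summable_measure_toReal (fun _ => dependsOn_wonAt.measurableSet) fun _ _ htt' =>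
    disjoint_wonAt hsub (by simpa using htt')

/-- If `A j` wins at toss `n + k` while `A i` is being spelled from toss `n + 1` on, then
`A j` is not shorter than `k` (it would be a substring of `A i`), its last `k` letters are
the first `k` of `A i`, and the rest of `A i` is independent of the game so far. -/
lemma measure_wonAt_inter_spellsAfter (hμ : IsCoinMeasure p μ) (hp0 : 0 ≤ p) (hp1 : p ≤ 1)
    (hsub : ∀ i j, i ≠ j → ¬ (A i) <:+: (A j)) {i j : Fin m} {k : ℕ}
    (hk : k ≤ (A i).length) :
    μ (wonAt A j (n + k) ∩ spellsAfter (A i) n) =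
      ENNReal.ofReal (overlapCoeff p (A i) (A j) k) * μ (wonAt A j (n + k)) := by
  rcases lt_or_ge (A j).length k with hjk | hjk
  · have hji : j ≠ i := by rintro rfl; omega
    have hempty : wonAt A j (n + k) ∩ spellsAfter (A i) n = ∅ :=
      Set.eq_empty_of_forall_notMem fun ξ ⟨hwon, hspell⟩ =>
        hsub j i hji (infix_of_occursAt (occursAt_of_hitTime_eq hwon.2) hspell hjk hk)
    rw [hempty, overlapCoeff_eq_zero_of_length_lt hk hjk]
    simp
  have hspell : ∀ ξ ∈ wonAt A j (n + k), ξ ∈ spellsAfter (A i) n ↔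
      (A i).take k = (A j).drop ((A j).length - k) ∧ ξ ∈ spellsAfter ((A i).drop k) (n + k) :=
    fun ξ hwon => by
      simpa only [spellsAfter, Set.mem_ofPred_eq, List.length_drop] using
        window_eq_iff_of_occursAt (occursAt_of_hitTime_eq hwon.2) hjk hk
  unfold overlapCoeff
  split_ifs with hmatch
  · have hinter : wonAt A j (n + k) ∩ spellsAfter (A i) n =
        wonAt A j (n + k) ∩ spellsAfter ((A i).drop k) (n + k) := by
      ext ξ
      exact and_congr_right fun hwon => (hspell ξ hwon).trans (and_iff_right hmatch)
    rw [hinter, hμ.measure_inter_spellsAfter hp0 hp1 dependsOn_wonAt, mul_comm]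
  · have hempty : wonAt A j (n + k) ∩ spellsAfter (A i) n = ∅ :=
      Set.eq_empty_of_forall_notMem fun ξ ⟨hwon, hA⟩ => hmatch ((hspell ξ hwon).1 hA).1
    simp [hempty]

lemma measure_lt_gameTime_mul_strP (hμ : IsCoinMeasure p μ) (hp0 : 0 ≤ p) (hp1 : p ≤ 1)
    (hsub : ∀ i j, i ≠ j → ¬ (A i) <:+: (A j)) (i : Fin m) (n : ℕ) :
    μ {ξ | (n : ℕ∞) < gameTime A ξ} * ENNReal.ofReal (strP p (A i)) =
      ∑ j, ∑ k ∈ Finset.Icc 1 (A i).length,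
        ENNReal.ofReal (overlapCoeff p (A i) (A j) k) * μ (wonAt A j (n + k)) := by
  have hdisj : (↑(Finset.univ ×ˢ Finset.Icc 1 (A i).length : Finset (Fin m × ℕ)) :
      Set (Fin m × ℕ)).PairwiseDisjoint
        fun jk => wonAt A jk.1 (n + jk.2) ∩ spellsAfter (A i) n := by
    rintro ⟨j, k⟩ - ⟨j', k'⟩ - hne
    refine (disjoint_wonAt hsub fun h => hne ?_).mono Set.inter_subset_left Set.inter_subset_left
    simp only [Prod.mk.injEq] at h ⊢
    exact ⟨h.1, by omega⟩
  rw [← hμ.measure_inter_spellsAfter hp0 hp1 dependsOn_lt_gameTime,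
    lt_gameTime_inter_spellsAfter, measure_biUnion_finset hdisj fun jk _ =>
      dependsOn_wonAt.measurableSet.inter (dependsOn_spellsAfter _).measurableSet,
    Finset.sum_product]
  refine Finset.sum_congr rfl fun j _ => Finset.sum_congr rfl fun k hk => ?_
  exact measure_wonAt_inter_spellsAfter hμ hp0 hp1 hsub (Finset.mem_Icc.1 hk).2

end Game

lemma tsum_mul_pow_eq_of_eq_sum_shift {ι : Type*} [Fintype ι] {a : ℕ → ℝ} {b c : ι → ℕ → ℝ}
    {K : Finset ℕ} {L : ℕ} {s : ℝ} (hs : |s| ≤ 1) (hKL : ∀ k ∈ K, k ≤ L)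
    (hb : ∀ j, Summable (b j)) (hc : ∀ j, ∀ k ∈ K, c j k ≠ 0 → ∀ t < k, b j t = 0)
    (ha : ∀ n, a n = ∑ j, ∑ k ∈ K, c j k * b j (n + k)) :
    (∑' n, a n * s ^ n) * s ^ L = ∑ j, (∑' t, b j t * s ^ t) * ∑ k ∈ K, c j k * s ^ (L - k) := by
  have hbs : ∀ j, Summable fun t => b j t * s ^ t := fun j =>
    (hb j).abs.of_norm_bounded fun t => by
      rw [Real.norm_eq_abs, abs_mul, abs_pow]
      exact mul_le_of_le_one_right (abs_nonneg _) (pow_le_one₀ (abs_nonneg s) hs)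
  have hshift : ∀ j, ∀ k ∈ K,
      c j k * ∑' n, b j (n + k) * s ^ (n + k) = c j k * ∑' t, b j t * s ^ t := by
    intro j k hk
    by_cases hc0 : c j k = 0
    · simp [hc0]
    · rw [← (hbs j).sum_add_tsum_nat_add k, Finset.sum_eq_zero fun t ht => by
        rw [hc j k hk hc0 t (Finset.mem_range.1 ht), zero_mul], zero_add]
  calc (∑' n, a n * s ^ n) * s ^ L
      = ∑' n, ∑ j, ∑ k ∈ K, c j k * s ^ (L - k) * (b j (n + k) * s ^ (n + k)) := by
        rw [← tsum_mul_right]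
        refine tsum_congr fun n => ?_
        rw [ha, mul_assoc, Finset.sum_mul]
        refine Finset.sum_congr rfl fun j _ => ?_
        rw [Finset.sum_mul]
        refine Finset.sum_congr rfl fun k hk => ?_
        have hpow : s ^ n * s ^ L = s ^ (n + k) * s ^ (L - k) := by
          rw [← pow_add, ← pow_add]
          congr 1
          have := hKL k hk
          omega
        linear_combination c j k * b j (n + k) * hpow
    _ = ∑ j, ∑ k ∈ K, c j k * s ^ (L - k) * ∑' n, b j (n + k) * s ^ (n + k) := by
        rw [Summable.tsum_finsetSum fun j _ =>
          summable_sum fun k _ => ((summable_nat_add_iff k).2 (hbs j)).mul_left _]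
        refine Finset.sum_congr rfl fun j _ => ?_
        rw [Summable.tsum_finsetSum fun k _ => ((summable_nat_add_iff k).2 (hbs j)).mul_left _]
        exact Finset.sum_congr rfl fun k _ => by rw [tsum_mul_left]
    _ = ∑ j, (∑' t, b j t * s ^ t) * ∑ k ∈ K, c j k * s ^ (L - k) := by
        refine Finset.sum_congr rfl fun j _ => ?_
        rw [Finset.mul_sum]
        refine Finset.sum_congr rfl fun k hk => ?_
        linear_combination s ^ (L - k) * hshift j k hk

theorem multi_Q_identity_general (p : ℝ) (hp0 : 0 < p) (hp1 : p < 1)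
    (μ : Measure (ℕ → Bool)) [IsProbabilityMeasure μ] (hμ : IsCoinMeasure p μ)
    (m : ℕ) (A : Fin m → List Bool)
    (hsub : ∀ i j, i ≠ j → ¬ (A i) <:+: (A j))
    (i : Fin m) (s : ℝ) (hs : s ∈ Set.Icc (-1 : ℝ) 1) :
    (∑' n : ℕ, (μ {ξ | (n : ℕ∞) < gameTime A ξ}).toReal * s ^ n) *
        strP p (A i) * s ^ (A i).length =
      ∑ j, (∑' n : ℕ, (μ {ξ | gameTime A ξ = (n : ℕ∞) ∧
              hitTime (A j) ξ = (n : ℕ∞)}).toReal * s ^ n) *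
        corrW p (A i) (A j) s := by
  have hrecursion : ∀ n : ℕ, (μ {ξ | (n : ℕ∞) < gameTime A ξ}).toReal * strP p (A i) =
      ∑ j, ∑ k ∈ Finset.Icc 1 (A i).length,
        overlapCoeff p (A i) (A j) k * (μ (wonAt A j (n + k))).toReal := fun n => by
    have h := congrArg ENNReal.toReal (measure_lt_gameTime_mul_strP hμ hp0.le hp1.le hsub i n)
    simpa [ENNReal.toReal_sum, ENNReal.mul_eq_top, ENNReal.toReal_ofReal, strP_nonneg,
      overlapCoeff_nonneg, hp0.le, hp1.le] using h
  have hvanish : ∀ j, ∀ k ∈ Finset.Icc 1 (A i).length, overlapCoeff p (A i) (A j) k ≠ 0 →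
      ∀ t < k, (μ (wonAt A j t)).toReal = 0 := by
    intro j k hk hc t htk
    have htj : t < (A j).length := by
      by_contra!
      exact hc (overlapCoeff_eq_zero_of_length_lt (Finset.mem_Icc.1 hk).2 (by omega))
    simp [wonAt_eq_empty_of_lt_length htj]
  rw [← tsum_mul_right (a := strP p (A i))]
  simp_rw [corrW_eq_sum_overlapCoeff, mul_right_comm _ _ (strP p (A i))]
  exact tsum_mul_pow_eq_of_eq_sum_shift (abs_le.2 hs) (fun k hk => (Finset.mem_Icc.1 hk).2)
    (summable_measure_wonAt hsub) hvanish hrecursion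

/-- In the `m`-player game, for every `1 ≤ i ≤ m` and every
`s ∈ [−1,1]`, `Q_τ(s) ⬝ P(A_i) ⬝ s^{l_i} = Σ_{j=1}^{m} g_τ^{A_j}(s) ⬝ w_{A_i}^{A_j}(s)`,
where `Q_τ(s) = Σ_{n≥0} μ(τ > n) s^n` and `g_τ^{A_j}(s) = Σ_{n≥0} p_n^{A_j} s^n`
with `p_n^{A_j} = μ(τ = τ_{A_j} = n)`. -/
theorem multi_Q_identity (p : ℝ) (hp0 : 0 < p) (hp1 : p < 1)
    (μ : Measure (ℕ → Bool)) [IsProbabilityMeasure μ] (hμ : IsCoinMeasure p μ)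
    (m : ℕ) (hm : 1 ≤ m) (A : Fin m → List Bool) (hlen : ∀ i, 1 ≤ (A i).length)
    (hsub : ∀ i j, i ≠ j → ¬ (A i) <:+: (A j))
    (i : Fin m) (s : ℝ) (hs : s ∈ Set.Icc (-1 : ℝ) 1) :
    (∑' n : ℕ, (μ {ξ | (n : ℕ∞) < gameTime A ξ}).toReal * s ^ n) *
        strP p (A i) * s ^ (A i).length =
      ∑ j, (∑' n : ℕ, (μ {ξ | gameTime A ξ = (n : ℕ∞) ∧
              hitTime (A j) ξ = (n : ℕ∞)}).toReal * s ^ n) *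
        corrW p (A i) (A j) s :=
  multi_Q_identity_general p hp0 hp1 μ hμ m A hsub i s hs
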